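/- arXiv:1301.4437 — 2 statements merged into one kernel-verified Lean document; each statement's English description precedes it below -/
import Mathlib

section
/- The complete elliptic integral of the first kind at the singular value k₋ = (√6-√2)/4 satisfies K(k₋) = (1/π)·2^(-7/3)·3^(1/4)·Γ(1/3)³. -/
open Real MeasureTheory

/-- The complete elliptic integral of the first kind,
`K(k) = ∫₀^{π/2} dθ / √(1 - k² sin²θ)`. -/
noncomputable def ellipticK (k : ℝ) : ℝ :=
  ∫ θ in (0:ℝ)..(π/2), 1 / Real.sqrt (1 - k^2 * Real.sin θ ^ 2)

/-! Both sides come from `∫₁^∞ dx / √(x³ - 1)`. The substitution `x = u^(-1/3)` turns it into the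
beta integral `B(1/6, 1/2) / 3`, and the substitution `x = 1 + √3 (1 + cos φ) / (1 - cos φ)` into
`3^(-1/4) ∫₀^π dφ / √(1 - k₋² sin²φ) = 2 · 3^(-1/4) K(k₋)`, where `k₋² = (2 - √3) / 4`.
The duplication and reflection formulas for `Γ` then express `Γ(1/6) Γ(1/2) / Γ(2/3)` through
`Γ(1/3)`. -/

open Set

theorem div_sqrt_eq_div_sqrt {a b A B : ℝ} (ha : 0 ≤ a) (hb : 0 ≤ b) (hA : 0 < A) (hB : 0 < B)
    (h : a ^ 2 * B = b ^ 2 * A) : a / √A = b / √B := by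
  rw [← sqrt_sq ha, ← sqrt_sq hb, ← sqrt_div (sq_nonneg a), ← sqrt_div (sq_nonneg b),
    (div_eq_div_iff hA.ne' hB.ne').mpr h]

theorem one_sub_mul_sin_sq_pos {m : ℝ} (hm : m < 1) (θ : ℝ) : 0 < 1 - m * sin θ ^ 2 := by
  rcases le_or_gt m 0 with h | h
  · nlinarith [sq_nonneg (sin θ)]
  · nlinarith [sin_sq_le_one θ]

theorem integral_rpow_mul_one_sub_rpow {a b : ℝ} (ha : 0 < a) (hb : 0 < b) :
    ∫ x in (0:ℝ)..1, x ^ (a - 1) * (1 - x) ^ (b - 1) = Gamma a * Gamma b / Gamma (a + b) := by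
  have hbeta :
      Complex.betaIntegral a b = ↑(∫ x in (0:ℝ)..1, x ^ (a - 1) * (1 - x) ^ (b - 1)) := by
    rw [Complex.betaIntegral, ← intervalIntegral.integral_ofReal]
    refine intervalIntegral.integral_congr fun x hx => ?_
    rw [uIcc_of_le zero_le_one] at hx
    push_cast
    rw [Complex.ofReal_cpow hx.1, Complex.ofReal_cpow (sub_nonneg.2 hx.2)]
    push_cast
    ring_nf
  have h := Complex.betaIntegral_eq_Gamma_mul_div a b (by simpa using ha) (by simpa using hb)
  rw [hbeta, ← Complex.ofReal_add, Complex.Gamma_ofReal, Complex.Gamma_ofReal,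
    Complex.Gamma_ofReal] at h
  exact_mod_cast h

theorem integral_comp_sin_zero_pi {g : ℝ → ℝ}
    (hg : IntervalIntegrable (fun x => g (sin x)) volume 0 (π / 2)) :
    ∫ x in (0:ℝ)..π, g (sin x) = 2 * ∫ x in (0:ℝ)..(π / 2), g (sin x) := by
  have hreflect : ∫ x in (π / 2)..π, g (sin x) = ∫ x in (0:ℝ)..(π / 2), g (sin x) := by
    simpa [sin_pi_sub, show π - π / 2 = π / 2 by ring] using
      (intervalIntegral.integral_comp_sub_left (fun x => g (sin x)) π (a := 0) (b := π / 2)).symm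
  have hg' : IntervalIntegrable (fun x => g (sin x)) volume (π / 2) π := by
    simpa [sin_pi_sub, show π - π / 2 = π / 2 by ring] using (hg.comp_sub_left π).symm
  rw [← intervalIntegral.integral_add_adjacent_intervals hg hg', hreflect, two_mul]

theorem cos_image_Ioo_zero_pi : cos '' Ioo 0 π = Ioo (-1) 1 := by
  ext y
  constructor
  · rintro ⟨φ, hφ, rfl⟩
    refine ⟨?_, ?_⟩
    · simpa using strictAntiOn_cos (Ioo_subset_Icc_self hφ) ⟨pi_pos.le, le_rfl⟩ hφ.2
    · simpa using strictAntiOn_cos ⟨le_rfl, pi_pos.le⟩ (Ioo_subset_Icc_self hφ) hφ.1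
  · rintro ⟨hy₁, hy₂⟩
    exact ⟨arccos y, ⟨arccos_pos.2 hy₂, arccos_lt_pi.2 hy₁⟩, cos_arccos hy₁.le hy₂.le⟩

theorem integral_Ioi_one_inv_sqrt_pow_sub_one {n : ℕ} (hn : n ≠ 0) :
    ∫ x in Ioi (1:ℝ), 1 / √(x ^ n - 1) =
      (1 / n) * ∫ u in (0:ℝ)..1, u ^ ((1 / 2 - 1 / n : ℝ) - 1) * (1 - u) ^ ((1 / 2 : ℝ) - 1) := by
  have hn₀ : (0:ℝ) < n := by positivity
  have hpow : ∀ u : ℝ, 0 < u → (u ^ (-(1 / n : ℝ))) ^ n = u⁻¹ := fun u hu => by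
    rw [← rpow_natCast, ← rpow_mul hu.le, neg_mul, one_div_mul_cancel hn₀.ne', rpow_neg_one]
  have himage : (fun u : ℝ => u ^ (-(1 / n : ℝ))) '' Ioo 0 1 = Ioi 1 := by
    ext y
    constructor
    · rintro ⟨u, ⟨hu₀, hu₁⟩, rfl⟩
      exact one_lt_rpow_of_pos_of_lt_one_of_neg hu₀ hu₁ (by simpa using hn₀)
    · intro hy
      have hy₀ : (0:ℝ) < y := zero_lt_one.trans hy
      refine ⟨y ^ (-(n:ℝ)),
        ⟨rpow_pos_of_pos hy₀ _, rpow_lt_one_of_one_lt_of_neg hy (by simpa using hn₀)⟩, ?_⟩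
      dsimp only
      rw [← rpow_mul hy₀.le, neg_mul_neg, mul_one_div_cancel hn₀.ne', rpow_one]
  have hinj : InjOn (fun u : ℝ => u ^ (-(1 / n : ℝ))) (Ioo 0 1) :=
    ((strictAntiOn_rpow_Ioi_of_exponent_neg (by simpa using hn₀)).mono
      fun _ hu => hu.1).injOn
  have hderiv : ∀ u ∈ Ioo (0:ℝ) 1, HasDerivWithinAt (fun u : ℝ => u ^ (-(1 / n : ℝ)))
      (-(1 / n : ℝ) * u ^ (-(1 / n : ℝ) - 1)) (Ioo 0 1) u := fun u hu =>
    (hasDerivAt_rpow_const (Or.inl hu.1.ne')).hasDerivWithinAt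
  rw [← himage, integral_image_eq_integral_abs_deriv_smul measurableSet_Ioo hderiv hinj,
    intervalIntegral.integral_of_le zero_le_one, integral_Ioc_eq_integral_Ioo,
    ← integral_const_mul]
  refine setIntegral_congr_fun measurableSet_Ioo fun u ⟨hu₀, hu₁⟩ => ?_
  have h1u : 0 < 1 - u := sub_pos.2 hu₁
  simp only [smul_eq_mul]
  rw [hpow u hu₀, abs_mul, abs_neg, abs_of_pos (by positivity : (0:ℝ) < 1 / n),
    abs_of_pos (rpow_pos_of_pos hu₀ _),
    show u⁻¹ - 1 = (1 - u) / u by field_simp, sqrt_div h1u.le, sqrt_eq_rpow, sqrt_eq_rpow,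
    show (1 / 2 - 1 / n : ℝ) - 1 = (-(1 / n : ℝ) - 1) + 1 / 2 by ring, rpow_add hu₀,
    show (1 / 2 : ℝ) - 1 = -(1 / 2) by norm_num, rpow_neg h1u.le]
  field_simp

theorem sqrt_three_sq : √3 ^ 2 = 3 := sq_sqrt (by norm_num)

theorem sq_sqrt_six_sub_sqrt_two_div_four : ((√6 - √2) / 4) ^ 2 = (2 - √3) / 4 := by
  have h62 : √6 * √2 = 2 * √3 := by
    rw [← sqrt_mul (by norm_num), show (6 * 2 : ℝ) = 2 ^ 2 * 3 by norm_num,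
      sqrt_mul (by norm_num), sqrt_sq zero_le_two]
  linear_combination
    (sq_sqrt (show (0:ℝ) ≤ 6 by norm_num) + sq_sqrt (show (0:ℝ) ≤ 2 by norm_num)) / 16 - h62 / 8

/-- With `u = cos φ` this is `x = 1 + √3 cot²(φ/2)`; since `√3 ^ 2 = 3`, the factor `x² + x + 1`
of `x³ - 1` becomes `12 (1 - k₋² sin²φ) / (1 - cos φ)²`. -/
noncomputable def cubicSubst (u : ℝ) : ℝ := 1 + √3 * ((1 + u) / (1 - u))

theorem cubicSubst_pow_three_sub_one {u : ℝ} (hu : u ≠ 1) :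
    cubicSubst u ^ 3 - 1 =
      12 * √3 * (1 + u) * (1 - (2 - √3) / 4 * (1 - u ^ 2)) / (1 - u) ^ 3 := by
  have : 1 - u ≠ 0 := sub_ne_zero.2 hu.symm
  rw [cubicSubst, eq_div_iff (pow_ne_zero 3 this)]
  field_simp
  linear_combination 4 * √3 * (1 + u) ^ 3 * sqrt_three_sq

theorem strictMonoOn_cubicSubst : StrictMonoOn cubicSubst (Iio 1) := by
  intro a ha b hb hab
  have ha' : 0 < 1 - a := sub_pos.2 ha
  have hb' : 0 < 1 - b := sub_pos.2 hb
  have : (1 + a) / (1 - a) < (1 + b) / (1 - b) := by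
    rw [div_lt_div_iff₀ ha' hb']
    linarith
  unfold cubicSubst
  gcongr

theorem cubicSubst_image_Ioo : cubicSubst '' Ioo (-1) 1 = Ioi 1 := by
  ext y
  constructor
  · rintro ⟨u, ⟨hu₁, hu₂⟩, rfl⟩
    have : 0 < √3 * ((1 + u) / (1 - u)) :=
      mul_pos (by positivity) (div_pos (by linarith) (by linarith))
    simp only [cubicSubst, mem_Ioi]
    linarith
  · intro hy
    rw [mem_Ioi] at hy
    have hden : 0 < y - 1 + √3 := by positivity
    refine ⟨(y - 1 - √3) / (y - 1 + √3), ⟨?_, ?_⟩, ?_⟩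
    · rw [lt_div_iff₀ hden]; linarith
    · rw [div_lt_one hden]; linarith [sqrt_pos.2 (show (0:ℝ) < 3 by norm_num)]
    · simp only [cubicSubst]
      rw [one_add_div hden.ne', one_sub_div hden.ne', div_div_div_cancel_right₀ hden.ne']
      field_simp
      ring

theorem hasDerivAt_cubicSubst {u : ℝ} (hu : u ≠ 1) :
    HasDerivAt cubicSubst (2 * √3 / (1 - u) ^ 2) u := by
  have h : 1 - u ≠ 0 := sub_ne_zero.2 hu.symm
  have hnum : HasDerivAt (fun x => 1 + x) 1 u := (hasDerivAt_id' u).const_add 1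
  have hden : HasDerivAt (fun x => 1 - x) (-1) u := by
    simpa using (hasDerivAt_id' u).const_sub 1
  refine (((hnum.div hden h).const_mul √3).const_add 1).congr_deriv ?_
  field_simp
  ring

theorem integral_Ioi_one_inv_sqrt_cube_sub_one :
    ∫ x in Ioi (1:ℝ), 1 / √(x ^ 3 - 1) =
      3 ^ (-(1:ℝ) / 4) * ∫ φ in (0:ℝ)..π, 1 / √(1 - (2 - √3) / 4 * sin φ ^ 2) := by
  have hcos : ∀ φ ∈ Ioo 0 π, cos φ ∈ Ioo (-1) 1 := fun φ hφ =>
    cos_image_Ioo_zero_pi ▸ mem_image_of_mem cos hφ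
  have himage : (cubicSubst ∘ cos) '' Ioo 0 π = Ioi 1 := by
    rw [image_comp, cos_image_Ioo_zero_pi, cubicSubst_image_Ioo]
  have hinj : InjOn (cubicSubst ∘ cos) (Ioo 0 π) :=
    strictMonoOn_cubicSubst.injOn.comp (injOn_cos.mono Ioo_subset_Icc_self)
      fun φ hφ => (hcos φ hφ).2
  have hderiv : ∀ φ ∈ Ioo 0 π, HasDerivWithinAt (cubicSubst ∘ cos)
      (2 * √3 / (1 - cos φ) ^ 2 * -sin φ) (Ioo 0 π) φ := fun φ hφ =>
    ((hasDerivAt_cubicSubst (hcos φ hφ).2.ne).comp φ (hasDerivAt_cos φ)).hasDerivWithinAt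
  have hb : ((3:ℝ) ^ (-(1:ℝ) / 4)) ^ 2 * √3 = 1 := by
    rw [← rpow_natCast, ← rpow_mul (by norm_num), sqrt_eq_rpow, ← rpow_add (by norm_num)]
    norm_num
  rw [← himage, integral_image_eq_integral_abs_deriv_smul measurableSet_Ioo hderiv hinj,
    intervalIntegral.integral_of_le pi_pos.le, integral_Ioc_eq_integral_Ioo,
    ← integral_const_mul]
  refine setIntegral_congr_fun measurableSet_Ioo fun φ hφ => ?_
  obtain ⟨hu₁, hu₂⟩ := hcos φ hφ
  have hsin : 0 < sin φ := sin_pos_of_pos_of_lt_pi hφ.1 hφ.2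
  have hR : 0 < 1 - (2 - √3) / 4 * sin φ ^ 2 :=
    one_sub_mul_sin_sq_pos (by linarith [sqrt_nonneg 3]) φ
  have h1u : 0 < 1 - cos φ := sub_pos.2 hu₂
  simp only [smul_eq_mul, Function.comp_apply]
  rw [cubicSubst_pow_three_sub_one hu₂.ne, ← sin_sq, abs_mul, abs_neg, abs_of_pos hsin,
    abs_of_pos (by positivity), mul_one_div, mul_one_div]
  have hA : 0 < 12 * √3 * (1 + cos φ) * (1 - (2 - √3) / 4 * sin φ ^ 2) / (1 - cos φ) ^ 3 :=
    div_pos (mul_pos (mul_pos (by positivity) (by linarith)) hR) (pow_pos h1u 3)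
  refine div_sqrt_eq_div_sqrt (by positivity) (by positivity) hA hR ?_
  set b : ℝ := 3 ^ (-(1:ℝ) / 4)
  field_simp
  linear_combination (4 * √3 * (4 - sin φ ^ 2 * (2 - √3))) * sin_sq φ
    - (4 * (4 - sin φ ^ 2 * (2 - √3)) * (1 - cos φ ^ 2) * √3) * hb
    + (4 * (4 - sin φ ^ 2 * (2 - √3)) * (1 - cos φ ^ 2) * b ^ 2) * sqrt_three_sq

theorem Gamma_one_sixth_mul_Gamma_one_half_div_Gamma_two_thirds :
    Gamma (1 / 6) * Gamma (1 / 2) / Gamma (2 / 3) =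
      3 * 2 ^ (-(4:ℝ) / 3) * Gamma (1 / 3) ^ 3 / π := by
  have hdup : Gamma (1 / 6) * Gamma (2 / 3) = Gamma (1 / 3) * 2 ^ (2 / 3 : ℝ) * √π := by
    have := Gamma_mul_Gamma_add_half (1 / 6)
    norm_num at this
    exact this
  have hrefl : Gamma (1 / 3) * Gamma (2 / 3) * √3 = 2 * π := by
    have := Gamma_mul_Gamma_one_sub (1 / 3)
    rw [show π * (1 / 3) = π / 3 by ring, sin_pi_div_three] at this
    norm_num at this
    rw [this]
    field_simp
  have h2 : (2:ℝ) ^ (2 / 3 : ℝ) = 4 * 2 ^ (-(4:ℝ) / 3) := by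
    rw [show (2 / 3 : ℝ) = 2 + -(4:ℝ) / 3 by norm_num, rpow_add two_pos]
    norm_num
  have hG : 0 < Gamma (2 / 3) := Gamma_pos_of_pos (by norm_num)
  have hπ : √π ^ 2 = π := sq_sqrt pi_pos.le
  rw [Gamma_one_half_eq, div_eq_div_iff hG.ne' pi_ne_zero]
  refine mul_right_cancel₀ hG.ne' ?_
  rw [h2] at hdup
  set c : ℝ := 2 ^ (-(4:ℝ) / 3)
  linear_combination √π * π * hdup + 4 * c * Gamma (1 / 3) * π * hπ
    - c * Gamma (1 / 3) * (2 * π + Gamma (1 / 3) * Gamma (2 / 3) * √3) * hrefl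
    + c * Gamma (1 / 3) * (Gamma (1 / 3) * Gamma (2 / 3)) ^ 2 * sqrt_three_sq

/-- `K(k₋) = (1/π)·2^(-7/3)·3^(1/4)·Γ(1/3)³` for the singular value `k₋ = (√6-√2)/4`. -/
theorem ellipticK_singular_value_minus :
    ellipticK ((Real.sqrt 6 - Real.sqrt 2) / 4) =
      (1 / π) * (2:ℝ) ^ (-(7:ℝ)/3) * (3:ℝ) ^ ((1:ℝ)/4) * Real.Gamma (1/3) ^ 3 := by
  have hm : (2 - √3) / 4 < 1 := by linarith [sqrt_nonneg 3]
  have hcont : Continuous fun θ => 1 / √(1 - (2 - √3) / 4 * sin θ ^ 2) :=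
    continuous_const.div (by fun_prop) fun θ => (sqrt_pos.2 (one_sub_mul_sin_sq_pos hm θ)).ne'
  have hfold := integral_comp_sin_zero_pi (g := fun t => 1 / √(1 - (2 - √3) / 4 * t ^ 2))
    (hcont.intervalIntegrable _ _)
  have hbeta :=
    integral_rpow_mul_one_sub_rpow (a := 1 / 6) (b := 1 / 2) (by norm_num) (by norm_num)
  rw [show (1 / 6 + 1 / 2 : ℝ) = 2 / 3 by norm_num,
    Gamma_one_sixth_mul_Gamma_one_half_div_Gamma_two_thirds] at hbeta
  have hsub := integral_Ioi_one_inv_sqrt_pow_sub_one three_ne_zero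
  rw [integral_Ioi_one_inv_sqrt_cube_sub_one, hfold, Nat.cast_ofNat,
    show (1 / 2 - 1 / 3 : ℝ) = 1 / 6 by norm_num, hbeta] at hsub
  have h3 : (3:ℝ) ^ ((1:ℝ) / 4) * 3 ^ (-(1:ℝ) / 4) = 1 := by
    rw [← rpow_add three_pos]
    norm_num
  have h2 : (2:ℝ) ^ (-(4:ℝ) / 3) = 2 * 2 ^ (-(7:ℝ) / 3) := by
    rw [show -(4:ℝ) / 3 = 1 + -(7:ℝ) / 3 by norm_num, rpow_add two_pos, rpow_one]
  rw [ellipticK, sq_sqrt_six_sub_sqrt_two_div_four]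
  set I := ∫ x in (0:ℝ)..(π / 2), 1 / √(1 - (2 - √3) / 4 * sin x ^ 2)
  set a : ℝ := 3 ^ ((1:ℝ) / 4)
  linear_combination (a / 2) * hsub - I * h3 + (a * Gamma (1 / 3) ^ 3 / (2 * π)) * h2
end

section
/- The derivative of the complete elliptic integral of the first kind satisfies K'(k) = E(k)/(k(1-k²)) - K(k)/k for 0 < k < 1. -/
/-!
Differentiating under the integral sign, which is legitimate because for `|k| ≤ r < 1` the
`k`-derivative `k sin² θ / Δ^{3/2}` of the integrand, `Δ = 1 - k² sin² θ`, is bounded uniformly,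
gives `K'(k) = ∫ k sin² θ / Δ^{3/2}`. Pointwise, this integrand equals
`√Δ / (k (1 - k²)) - 1 / (k √Δ)` minus `k / (1 - k²)` times the `θ`-derivative of
`sin θ cos θ / √Δ`, and that derivative integrates to zero over `[0, π/2]`.
-/

open Real MeasureTheory

/-- Complete elliptic integral of the second kind. -/
noncomputable def ellipticE (k : ℝ) : ℝ :=
  ∫ θ in (0:ℝ)..(π/2), Real.sqrt (1 - k^2 * Real.sin θ ^ 2)

open Set
open scoped Topology

lemma one_sub_sq_mul_sq_pos {x s : ℝ} (hx : |x| < 1) (hs : |s| ≤ 1) : 0 < 1 - x ^ 2 * s ^ 2 := by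
  have : x ^ 2 * s ^ 2 < 1 := by
    rw [← mul_pow, ← sq_abs, abs_mul]
    exact pow_lt_one₀ (by positivity) (mul_lt_one_of_nonneg_of_lt_one_left (abs_nonneg _) hx hs)
      two_ne_zero
  linarith

lemma one_sub_sq_mul_sin_sq_pos {x : ℝ} (hx : |x| < 1) (θ : ℝ) : 0 < 1 - x ^ 2 * sin θ ^ 2 :=
  one_sub_sq_mul_sq_pos hx (abs_sin_le_one θ)

lemma hasDerivAt_one_div_sqrt_one_sub_sq_mul (s : ℝ) {x : ℝ} (h : 0 < 1 - x ^ 2 * s ^ 2) :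
    HasDerivAt (fun y => 1 / √(1 - y ^ 2 * s ^ 2))
      (x * s ^ 2 / ((1 - x ^ 2 * s ^ 2) * √(1 - x ^ 2 * s ^ 2))) x := by
  have hu : HasDerivAt (fun y => 1 - y ^ 2 * s ^ 2) (-(2 * x * s ^ 2)) x := by
    simpa using ((hasDerivAt_pow 2 x).mul_const (s ^ 2)).const_sub 1
  refine ((hasDerivAt_const x (1 : ℝ)).fun_div (hu.sqrt h.ne') (sqrt_pos.2 h).ne').congr_deriv ?_
  rw [sq_sqrt h.le]
  field_simp
  ring

lemma abs_mul_sq_div_mul_sqrt_le {x s r : ℝ} (hx : |x| ≤ r) (hr : r < 1) (hs : |s| ≤ 1) :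
    |x * s ^ 2 / ((1 - x ^ 2 * s ^ 2) * √(1 - x ^ 2 * s ^ 2))| ≤
      r / ((1 - r ^ 2) * √(1 - r ^ 2)) := by
  have hs2 : s ^ 2 ≤ 1 := by simpa using pow_le_pow_left₀ (abs_nonneg s) hs 2
  have hxr : x ^ 2 ≤ r ^ 2 := sq_le_sq' (abs_le.1 hx).1 (abs_le.1 hx).2
  have hr2 : 0 < 1 - r ^ 2 := by nlinarith [abs_nonneg x]
  have hΔ : 1 - r ^ 2 ≤ 1 - x ^ 2 * s ^ 2 := by nlinarith [sq_nonneg x, sq_nonneg s]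
  have hΔ0 : 0 < 1 - x ^ 2 * s ^ 2 := hr2.trans_le hΔ
  rw [abs_div, abs_of_pos (mul_pos hΔ0 (sqrt_pos.2 hΔ0)), abs_mul, abs_of_nonneg (sq_nonneg s)]
  have hr0 : 0 ≤ r := (abs_nonneg x).trans hx
  gcongr
  calc |x| * s ^ 2 ≤ |x| * 1 := by gcongr
    _ ≤ r := by rwa [mul_one]

lemma continuous_div_sqrt_one_sub_sq_mul_sin_sq {k : ℝ} (hk : |k| < 1) {f : ℝ → ℝ}
    (hf : Continuous f) : Continuous fun θ => f θ / √(1 - k ^ 2 * sin θ ^ 2) :=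
  hf.div (by fun_prop) fun θ => (sqrt_pos.2 (one_sub_sq_mul_sin_sq_pos hk θ)).ne'

lemma continuous_div_mul_sqrt_one_sub_sq_mul_sin_sq {k : ℝ} (hk : |k| < 1) {f : ℝ → ℝ}
    (hf : Continuous f) :
    Continuous fun θ => f θ / ((1 - k ^ 2 * sin θ ^ 2) * √(1 - k ^ 2 * sin θ ^ 2)) :=
  hf.div (by fun_prop) fun θ =>
    (mul_pos (one_sub_sq_mul_sin_sq_pos hk θ) (sqrt_pos.2 (one_sub_sq_mul_sin_sq_pos hk θ))).ne'

lemma hasDerivAt_ellipticK_of_abs_lt_one {k : ℝ} (hk : |k| < 1) :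
    HasDerivAt ellipticK
      (∫ θ in (0:ℝ)..π/2, k * sin θ ^ 2 / ((1 - k ^ 2 * sin θ ^ 2) * √(1 - k ^ 2 * sin θ ^ 2)))
      k := by
  obtain ⟨r, hkr, hr⟩ := exists_between hk
  have hIcc : Icc (-r) r ∈ 𝓝 k :=
    Icc_mem_nhds (by linarith [neg_abs_le k]) (by linarith [le_abs_self k])
  exact (intervalIntegral.hasDerivAt_integral_of_dominated_loc_of_deriv_le hIcc
    (.of_forall fun x => (by fun_prop : Measurable _).aestronglyMeasurable)
    ((continuous_div_sqrt_one_sub_sq_mul_sin_sq hk continuous_const).intervalIntegrable _ _)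
    (by fun_prop : Measurable _).aestronglyMeasurable
    (ae_of_all _ fun θ _ x hx => abs_mul_sq_div_mul_sqrt_le (abs_le.2 hx) hr (abs_sin_le_one θ))
    intervalIntegrable_const
    (ae_of_all _ fun θ _ x hx => hasDerivAt_one_div_sqrt_one_sub_sq_mul _
      (one_sub_sq_mul_sin_sq_pos ((abs_le.2 hx).trans_lt hr) θ))).2

lemma hasDerivAt_sin_mul_cos_div_sqrt (k : ℝ) {θ : ℝ} (h : 0 < 1 - k ^ 2 * sin θ ^ 2) :
    HasDerivAt (fun t => sin t * cos t / √(1 - k ^ 2 * sin t ^ 2))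
      ((1 - 2 * sin θ ^ 2 + k ^ 2 * sin θ ^ 4) /
        ((1 - k ^ 2 * sin θ ^ 2) * √(1 - k ^ 2 * sin θ ^ 2))) θ := by
  have hu := (((hasDerivAt_sin θ).fun_pow 2).const_mul (k ^ 2)).const_sub 1
  refine (((hasDerivAt_sin θ).fun_mul (hasDerivAt_cos θ)).fun_div (hu.sqrt h.ne')
    (sqrt_pos.2 h).ne').congr_deriv ?_
  have hS2 : √(1 - k ^ 2 * sin θ ^ 2) ^ 2 = 1 - k ^ 2 * sin θ ^ 2 := sq_sqrt h.le
  have hS0 : √(1 - k ^ 2 * sin θ ^ 2) ≠ 0 := (sqrt_pos.2 h).ne'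
  generalize √(1 - k ^ 2 * sin θ ^ 2) = S at hS2 hS0 ⊢
  rw [← hS2]
  field_simp
  linear_combination 2 * (cos θ ^ 2 - sin θ ^ 2) * hS2 + 2 * sin_sq_add_cos_sq θ

-- The integrand is the `θ`-derivative of `sin θ cos θ / √(1 - k² sin² θ)`, zero at `0` and `π/2`.
lemma integral_deriv_sin_mul_cos_div_sqrt_eq_zero {k : ℝ} (hk : |k| < 1) :
    ∫ θ in (0:ℝ)..π/2, (1 - 2 * sin θ ^ 2 + k ^ 2 * sin θ ^ 4) /
        ((1 - k ^ 2 * sin θ ^ 2) * √(1 - k ^ 2 * sin θ ^ 2)) = 0 := by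
  have hΔ := one_sub_sq_mul_sin_sq_pos hk
  rw [intervalIntegral.integral_eq_sub_of_hasDerivAt
    (fun θ _ => hasDerivAt_sin_mul_cos_div_sqrt k (hΔ θ))
    ((continuous_div_mul_sqrt_one_sub_sq_mul_sin_sq hk (by fun_prop)).intervalIntegrable _ _)]
  simp

lemma mul_sq_div_mul_sqrt_eq {k s : ℝ} (hk : k ≠ 0) (hk1 : 1 - k ^ 2 ≠ 0)
    (h : 0 < 1 - k ^ 2 * s ^ 2) :
    k * s ^ 2 / ((1 - k ^ 2 * s ^ 2) * √(1 - k ^ 2 * s ^ 2)) =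
      √(1 - k ^ 2 * s ^ 2) / (k * (1 - k ^ 2)) - 1 / √(1 - k ^ 2 * s ^ 2) / k -
        k / (1 - k ^ 2) * ((1 - 2 * s ^ 2 + k ^ 2 * s ^ 4) /
          ((1 - k ^ 2 * s ^ 2) * √(1 - k ^ 2 * s ^ 2))) := by
  have hS := sqrt_pos.2 h
  field_simp
  rw [sq_sqrt h.le]
  ring

/-- For `0 < k < 1`, `K'(k) = E(k)/(k(1-k²)) - K(k)/k`. -/
theorem hasDerivAt_ellipticK {k : ℝ} (hk0 : 0 < k) (hk1 : k < 1) :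
    HasDerivAt ellipticK (ellipticE k / (k * (1 - k^2)) - ellipticK k / k) k := by
  have hk : |k| < 1 := by rwa [abs_of_pos hk0]
  have hk2 : 1 - k ^ 2 ≠ 0 := by nlinarith
  have hE : IntervalIntegrable (fun θ => √(1 - k ^ 2 * sin θ ^ 2)) volume 0 (π / 2) :=
    (by fun_prop : Continuous _).intervalIntegrable _ _
  have hK : IntervalIntegrable (fun θ => 1 / √(1 - k ^ 2 * sin θ ^ 2)) volume 0 (π / 2) :=
    (continuous_div_sqrt_one_sub_sq_mul_sin_sq hk continuous_const).intervalIntegrable _ _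
  have hP : IntervalIntegrable (fun θ => (1 - 2 * sin θ ^ 2 + k ^ 2 * sin θ ^ 4) /
      ((1 - k ^ 2 * sin θ ^ 2) * √(1 - k ^ 2 * sin θ ^ 2))) volume 0 (π / 2) :=
    (continuous_div_mul_sqrt_one_sub_sq_mul_sin_sq hk (by fun_prop)).intervalIntegrable _ _
  convert hasDerivAt_ellipticK_of_abs_lt_one hk using 1
  rw [intervalIntegral.integral_congr fun θ _ =>
      mul_sq_div_mul_sqrt_eq hk0.ne' hk2 (one_sub_sq_mul_sin_sq_pos hk θ),
    intervalIntegral.integral_sub ((hE.div_const _).sub (hK.div_const _)) (hP.const_mul _),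
    intervalIntegral.integral_sub (hE.div_const _) (hK.div_const _),
    intervalIntegral.integral_div, intervalIntegral.integral_div,
    intervalIntegral.integral_const_mul, integral_deriv_sin_mul_cos_div_sqrt_eq_zero hk,
    mul_zero, sub_zero]
  rfl
end
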